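/- arXiv:1612.01144 — 4 statements merged into one kernel-verified Lean document; each statement's English description precedes it below -/
import Mathlib

section
/- Let k be a field of characteristic zero, X ⊆ 𝔸ⁿ⁺¹ an affine variety that is the cone over a projective variety (i.e., its vanishing ideal I ⊆ k[x₀,…,xₙ] is homogeneous) with x₀ ∉ I. Suppose δ is a derivation of the localization k[X][1/x₀] which is locally nilpotent and satisfies δ(x₀) = 0. Then there exists d ∈ ℕ such that the derivation x₀^{d+1}·δ maps k[X] into k[X] and is a locally nilpotent derivation of k[X] that vanishes on the quotient ring k[X]/(x₀). -/
/-!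
Write `A = k[X]`, `t = x₀` and `L = A[1/t]`. Each of the finitely many generators `g` of `A` has
`tᵉ δ(g) ∈ A` for some `e`; for a common exponent `d` the set of `a` with `tᵈ δ(a) ∈ A` is a
subalgebra by the Leibniz rule, so it is all of `A`. As `δ t = 0`, the derivation `tᵈ⁺¹ δ`
satisfies `(tᵈ⁺¹ δ)ᵐ = t⁽ᵈ⁺¹⁾ᵐ δᵐ` and stays locally nilpotent, and the extra factor `t` puts
its values in `(t)`. Since `t` is not a zero divisor, `A → L` is injective, so all of this can be
read off in `L`.
-/

namespace Derivation

variable {k A L : Type*} [CommSemiring k] [CommRing A] [CommRing L]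
  [Algebra k A] [Algebra k L] [Algebra A L] [IsScalarTower k A L]

theorem iterate_smul_apply_of_map_eq_zero (δ : Derivation k L L) {u : L} (hu : δ u = 0)
    (m : ℕ) (x : L) : (⇑(u • δ))^[m] x = u ^ m * (⇑δ)^[m] x := by
  induction m with
  | zero => simp
  | succ m ih =>
    have hum : δ (u ^ m) = 0 := by rw [leibniz_pow, hu, smul_zero, smul_zero]
    rw [Function.iterate_succ_apply', ih, smul_apply, leibniz, hum, smul_zero, add_zero,
      Function.iterate_succ_apply', smul_eq_mul, smul_eq_mul, pow_succ]
    ring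

theorem mul_map_mem_range_of_mem_adjoin (δ : Derivation k L L) (u : L) {s : Set A}
    (hs : ∀ a ∈ s, u * δ (algebraMap A L a) ∈ (algebraMap A L).range)
    {a : A} (ha : a ∈ Algebra.adjoin k s) :
    u * δ (algebraMap A L a) ∈ (algebraMap A L).range := by
  induction ha using Algebra.adjoin_induction with
  | mem a ha => exact hs a ha
  | algebraMap r =>
    rw [← IsScalarTower.algebraMap_apply, map_algebraMap, mul_zero]
    exact zero_mem _
  | add a b _ _ ha hb =>
    rw [map_add, map_add, mul_add]
    exact add_mem ha hb
  | mul a b _ _ ha hb =>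
    rw [map_mul, leibniz, smul_eq_mul, smul_eq_mul, mul_add, mul_left_comm, mul_left_comm u]
    exact add_mem (mul_mem (RingHom.mem_range_self _ a) hb)
      (mul_mem (RingHom.mem_range_self _ b) ha)

theorem exists_pow_mul_map_mem_range [Algebra.FiniteType k A] (t : A)
    [IsLocalization.Away t L] (δ : Derivation k L L) :
    ∃ d : ℕ, ∀ a : A, algebraMap A L t ^ d * δ (algebraMap A L a) ∈ (algebraMap A L).range := by
  obtain ⟨s, hs⟩ := Algebra.FiniteType.out (R := k) (A := A)
  choose e b hb using fun a : A => IsLocalization.Away.surj t (δ (algebraMap A L a))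
  refine ⟨s.sup e, fun a => ?_⟩
  refine mul_map_mem_range_of_mem_adjoin δ _ (fun x hx => ?_) (hs ▸ Algebra.mem_top)
  obtain ⟨j, hj⟩ := Nat.exists_eq_add_of_le (Finset.le_sup (f := e) hx)
  refine ⟨t ^ j * b x, ?_⟩
  rw [hj, map_mul, map_pow, ← hb, pow_add, mul_comm, mul_assoc, mul_comm]

theorem exists_restrict_of_forall_map_mem_range (hinj : Function.Injective (algebraMap A L))
    (D : Derivation k L L) (hD : ∀ a : A, D (algebraMap A L a) ∈ (algebraMap A L).range) :
    ∃ D' : Derivation k A A, ∀ a : A, algebraMap A L (D' a) = D (algebraMap A L a) := by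
  choose D' hD' using hD
  refine ⟨Derivation.mk' ⟨⟨D', fun a b => hinj ?_⟩, fun r a => hinj ?_⟩ fun a b => hinj ?_, hD'⟩
  · simp only [hD', map_add]
  · simp only [hD', RingHom.id_apply, Algebra.smul_def, map_mul,
      ← IsScalarTower.algebraMap_apply]
    rw [← Algebra.smul_def, map_smul, Algebra.smul_def]
  · simp [hD', leibniz]

theorem exists_pow_succ_smul_restrict [Algebra.FiniteType k A] {t : A}
    (ht : t ∈ nonZeroDivisors A) [IsLocalization.Away t L] (δ : Derivation k L L)
    (hnilp : ∀ x : L, ∃ m : ℕ, (⇑δ)^[m] x = 0) (hδt : δ (algebraMap A L t) = 0) :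
    ∃ (d : ℕ) (δ' : Derivation k A A),
      (∀ a : A, algebraMap A L (δ' a) = algebraMap A L t ^ (d + 1) * δ (algebraMap A L a)) ∧
      (∀ a, ∃ m : ℕ, (⇑δ')^[m] a = 0) ∧
      (∀ a, δ' a ∈ Ideal.span {t}) := by
  have hinj : Function.Injective (algebraMap A L) :=
    IsLocalization.injective L (Submonoid.powers_le.2 ht)
  obtain ⟨d, hd⟩ := exists_pow_mul_map_mem_range t δ
  have hrange : ∀ a : A,
      (algebraMap A L t ^ (d + 1) • δ) (algebraMap A L a) ∈ (algebraMap A L).range := by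
    intro a
    obtain ⟨c, hc⟩ := hd a
    exact ⟨t * c, by rw [smul_apply, smul_eq_mul, map_mul, hc, pow_succ]; ring⟩
  obtain ⟨δ', hδ'⟩ := exists_restrict_of_forall_map_mem_range hinj _ hrange
  refine ⟨d, δ', fun a => hδ' a, fun a => ?_, fun a => ?_⟩
  · have hpow : δ (algebraMap A L t ^ (d + 1)) = 0 := by
      rw [leibniz_pow, hδt, smul_zero, smul_zero]
    obtain ⟨m, hm⟩ := hnilp (algebraMap A L a)
    refine ⟨m, hinj ?_⟩
    rw [(Function.Semiconj.iterate_right hδ' m) a, iterate_smul_apply_of_map_eq_zero δ hpow,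
      hm, mul_zero, map_zero]
  · obtain ⟨c, hc⟩ := hd a
    refine Ideal.mem_span_singleton'.2 ⟨c, hinj ?_⟩
    rw [hδ', smul_apply, smul_eq_mul, map_mul, hc, pow_succ]
    ring

end Derivation

theorem stmt1_general {k : Type*} [Field k] {n : ℕ}
    (I : Ideal (MvPolynomial (Fin (n + 1)) k)) (hprime : I.IsPrime)
    (hx0 : (MvPolynomial.X 0 : MvPolynomial (Fin (n + 1)) k) ∉ I)
    {L : Type*} [CommRing L] [Algebra k L]
    [Algebra (MvPolynomial (Fin (n + 1)) k ⧸ I) L]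
    [IsScalarTower k (MvPolynomial (Fin (n + 1)) k ⧸ I) L]
    (hLoc : IsLocalization.Away (Ideal.Quotient.mk I (MvPolynomial.X 0)) L)
    (δ : Derivation k L L)
    (hnilp : ∀ x : L, ∃ m : ℕ, (⇑δ)^[m] x = 0)
    (hδx0 : δ (algebraMap (MvPolynomial (Fin (n + 1)) k ⧸ I) L
      (Ideal.Quotient.mk I (MvPolynomial.X 0))) = 0) :
    ∃ (d : ℕ) (δ' : Derivation k (MvPolynomial (Fin (n + 1)) k ⧸ I)
        (MvPolynomial (Fin (n + 1)) k ⧸ I)),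
      (∀ x : MvPolynomial (Fin (n + 1)) k ⧸ I,
          algebraMap (MvPolynomial (Fin (n + 1)) k ⧸ I) L (δ' x) =
            (algebraMap (MvPolynomial (Fin (n + 1)) k ⧸ I) L
              (Ideal.Quotient.mk I (MvPolynomial.X 0))) ^ (d + 1) *
              δ (algebraMap (MvPolynomial (Fin (n + 1)) k ⧸ I) L x)) ∧
      (∀ x, ∃ m : ℕ, (⇑δ')^[m] x = 0) ∧
      (∀ x, δ' x ∈ Ideal.span {Ideal.Quotient.mk I (MvPolynomial.X 0)}) := by
  have hx0_ne : Ideal.Quotient.mk I (MvPolynomial.X 0) ≠ 0 :=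
    mt Ideal.Quotient.eq_zero_iff_mem.1 hx0
  exact Derivation.exists_pow_succ_smul_restrict (mem_nonZeroDivisors_of_ne_zero hx0_ne) δ
    hnilp hδx0

set_option synthInstance.maxHeartbeats 1000000 in
/-- Lifting of `Gₐ`-actions to affine cones (Lemma `lifting`): let
`X = Spec k[x₀,…,xₙ]/I` be the affine cone over a projective variety (`I` a
homogeneous prime ideal with `x₀ ∉ I`) and let `δ` be a locally nilpotent
`k`-derivation of the localization `k[X][1/x₀]` with `δ(x₀) = 0`. Then for some
`d ∈ ℕ` the derivation `x₀^{d+1}·δ` restricts to a locally nilpotent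
`k`-derivation `δ'` of `k[X]` all of whose values lie in the ideal `(x₀)`,
i.e. `δ'` vanishes on `k[X]/(x₀)`. -/
theorem stmt1 {k : Type*} [Field k] [CharZero k] {n : ℕ}
    (I : Ideal (MvPolynomial (Fin (n + 1)) k)) (hprime : I.IsPrime)
    (hIhom : ∀ f ∈ I, ∀ i : ℕ, MvPolynomial.homogeneousComponent i f ∈ I)
    (hx0 : (MvPolynomial.X 0 : MvPolynomial (Fin (n + 1)) k) ∉ I)
    {L : Type*} [CommRing L] [Algebra k L]
    [Algebra (MvPolynomial (Fin (n + 1)) k ⧸ I) L]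
    [IsScalarTower k (MvPolynomial (Fin (n + 1)) k ⧸ I) L]
    (hLoc : IsLocalization.Away (Ideal.Quotient.mk I (MvPolynomial.X 0)) L)
    (δ : Derivation k L L)
    (hnilp : ∀ x : L, ∃ m : ℕ, (⇑δ)^[m] x = 0)
    (hδx0 : δ (algebraMap (MvPolynomial (Fin (n + 1)) k ⧸ I) L
      (Ideal.Quotient.mk I (MvPolynomial.X 0))) = 0) :
    ∃ (d : ℕ) (δ' : Derivation k (MvPolynomial (Fin (n + 1)) k ⧸ I)
        (MvPolynomial (Fin (n + 1)) k ⧸ I)),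
      (∀ x : MvPolynomial (Fin (n + 1)) k ⧸ I,
          algebraMap (MvPolynomial (Fin (n + 1)) k ⧸ I) L (δ' x) =
            (algebraMap (MvPolynomial (Fin (n + 1)) k ⧸ I) L
              (Ideal.Quotient.mk I (MvPolynomial.X 0))) ^ (d + 1) *
              δ (algebraMap (MvPolynomial (Fin (n + 1)) k ⧸ I) L x)) ∧
      (∀ x, ∃ m : ℕ, (⇑δ')^[m] x = 0) ∧
      (∀ x, δ' x ∈ Ideal.span {Ideal.Quotient.mk I (MvPolynomial.X 0)}) :=
  stmt1_general I hprime hx0 hLoc δ hnilp hδx0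
end

section
/- Let h : N_ℚ → ℚ be a concave piecewise affine function with linear part lin h, and set Box_h = {u ∈ M_ℚ : ⟨u, v⟩ ≥ (lin h)(v) for all v ∈ N_ℚ}. Define h*(u) = inf_{v ∈ N_ℚ} (⟨u, v⟩ − h(v)). Then for every u ∈ Box_h, the infimum h*(u) is finite, i.e., the function v ↦ ⟨u,v⟩ − h(v) is bounded below. -/
theorem Finset.inf'_add_le_inf'_add_sup' {ι α : Type*} [AddCommMonoid α] [LinearOrder α]
    [IsOrderedAddMonoid α] {s : Finset ι} (H : s.Nonempty) (f g : ι → α) :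
    s.inf' H (fun i => f i + g i) ≤ s.inf' H f + s.sup' H g := by
  obtain ⟨i, hi, hfi⟩ := s.exists_mem_eq_inf' H f
  calc s.inf' H (fun i => f i + g i) ≤ f i + g i := s.inf'_le _ hi
    _ ≤ s.inf' H f + s.sup' H g := hfi ▸ add_le_add_right (s.le_sup' g hi) _

/-- Finiteness of the dual `h*` on the box `Box_h`: let `h` be a concave
piecewise affine function, written as the (finite) minimum of affine functions
`ℓ t + a t`, so that its linear part is `lin h = min_t ℓ t`. If `u ∈ Box_h`,
i.e. `⟨u, v⟩ ≥ (lin h)(v)` for all `v`, then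
`h*(u) = inf_v (⟨u, v⟩ − h(v))` is finite, i.e. `v ↦ ⟨u, v⟩ − h(v)` is bounded
below. -/
theorem stmt11 {V : Type*} [AddCommGroup V] [Module ℚ V] (r : ℕ)
    (ℓ : Fin (r + 1) → V →ₗ[ℚ] ℚ) (a : Fin (r + 1) → ℚ)
    (h : V → ℚ)
    (hh : ∀ x, h x = Finset.univ.inf' Finset.univ_nonempty (fun t => ℓ t x + a t))
    (u : V →ₗ[ℚ] ℚ)
    (hu : ∀ v, Finset.univ.inf' Finset.univ_nonempty (fun t => ℓ t v) ≤ u v) :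
    BddBelow (Set.range fun v => u v - h v) := by
  refine ⟨-Finset.univ.sup' Finset.univ_nonempty a, ?_⟩
  rintro _ ⟨v, rfl⟩
  have h_le_lin_add := Finset.univ.inf'_add_le_inf'_add_sup' Finset.univ_nonempty (ℓ · v) a
  rw [← hh v] at h_le_lin_add
  linarith [hu v]
end

section
/- Let k be a field, m ≥ 2, and consider polynomials L_ℓ = z_ℓ·A₀ + A₁ + A_ℓ for 2 ≤ ℓ ≤ m in a polynomial ring, where A₀,…,A_m are monomials in pairwise disjoint sets of variables and z₂,…,z_m ∈ k* are pairwise distinct. A point x of the vanishing locus V(L₂,…,L_m) is a singular point if and only if there exist at least three indices i ∈ {0,1,…,m} such that all partial derivatives of the monomial A_i vanish at x. -/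
/-!
Write `∑ c_ℓ L_ℓ = ∑ w_i A_i`. Because the `A_i` live in disjoint sets of variables, the
gradient of this combination vanishes at `x` exactly when `∇A_i(x) = 0` for every `i` with
`w_i ≠ 0`. The vectors `w` that arise are precisely the linear relations among the images of
`A_0, …, A_m` in the plane spanned by `A_0, A_1` modulo the `L_ℓ`, namely `e₁`, `e₂` and
`-(z_ℓ, 1)`. As the `z_ℓ` are nonzero and pairwise distinct, these vectors are pairwise
independent, so every nontrivial relation involves at least three of them, while any three
vectors in a plane do satisfy a nontrivial relation.
-/

open MvPolynomial Finset Module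

section LinearRelations

variable {k V κ : Type*} [Field k] [AddCommGroup V] [Module k V] {s : Finset κ}

open Classical in
theorem three_le_card_filter_ne_zero_of_sum_smul_eq_zero {v : κ → V} (hv : ∀ i ∈ s, v i ≠ 0)
    (hpair : ∀ i ∈ s, ∀ j ∈ s, i ≠ j → LinearIndepOn k v {i, j}) {w : κ → k}
    (hw : ∑ i ∈ s, w i • v i = 0) {i₀ : κ} (hi₀ : i₀ ∈ s) (hwi₀ : w i₀ ≠ 0) :
    3 ≤ #(s.filter (w · ≠ 0)) := by
  set T := s.filter (w · ≠ 0)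
  have hmemT : ∀ {i}, i ∈ T → i ∈ s ∧ w i ≠ 0 := fun h => mem_filter.1 h
  have hsumT : ∑ i ∈ T, w i • v i = 0 := by
    rw [sum_filter_of_ne fun i _ h => left_ne_zero_of_smul h, hw]
  have hpos : 0 < #T := card_pos.2 ⟨i₀, mem_filter.2 ⟨hi₀, hwi₀⟩⟩
  by_contra! hlt
  obtain hone | htwo : #T = 1 ∨ #T = 2 := by omega
  · obtain ⟨a, hTa⟩ := card_eq_one.1 hone
    obtain ⟨has, hwa⟩ := hmemT (hTa ▸ mem_singleton_self a)
    rw [hTa, sum_singleton] at hsumT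
    exact (smul_eq_zero.1 hsumT).elim hwa (hv a has)
  · obtain ⟨a, b, hab, hTab⟩ := card_eq_two.1 htwo
    obtain ⟨has, hwa⟩ := hmemT (hTab ▸ mem_insert_self a {b})
    obtain ⟨hbs, -⟩ := hmemT (hTab ▸ mem_insert_of_mem (mem_singleton_self b))
    rw [hTab, sum_pair hab] at hsumT
    exact hwa ((LinearIndepOn.pair_iff v hab).1 (hpair a has b hbs hab) _ _ hsumT).1

theorem exists_sum_smul_eq_zero_of_finrank_lt_card [Module.Finite k V] {t : Finset κ}
    (hts : t ⊆ s) (v : κ → V) (ht : finrank k V < #t) :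
    ∃ w : κ → k, ∑ i ∈ s, w i • v i = 0 ∧ (∃ i ∈ s, w i ≠ 0) ∧ ∀ i, w i ≠ 0 → i ∈ t := by
  have hdep : ¬ LinearIndepOn k v (t : Set κ) := fun h =>
    ht.not_ge (by simpa using h.linearIndependent.fintype_card_le_finrank)
  simp only [linearIndepOn_iff'', coe_subset, not_forall] at hdep
  obtain ⟨u, g, hut, hg0, hsum, i, hi, hgi⟩ := hdep
  refine ⟨g, ?_, ⟨i, hts (hut hi), hgi⟩, fun j hj => hut (by_contra fun h => hj (hg0 j h))⟩
  rw [← sum_subset (hut.trans hts) fun j _ hj => by rw [hg0 j hj, zero_smul]]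
  exact hsum

end LinearRelations

theorem pderiv_eq_zero_of_mem_supported {R σ : Type*} [CommSemiring R] {S : Set σ}
    {p : MvPolynomial σ R} (hp : p ∈ supported R S) {v : σ} (hv : v ∉ S) : pderiv v p = 0 :=
  pderiv_eq_zero_of_notMem_vars fun h => hv (mem_supported.1 hp h)

theorem forall_eval_pderiv_sum_C_mul_eq_zero_iff {R σ κ : Type*} [CommRing R] [NoZeroDivisors R]
    {s : Finset κ} {A : κ → MvPolynomial σ R} {V : κ → Set σ}
    (hdisj : (s : Set κ).PairwiseDisjoint V) (hA : ∀ i ∈ s, A i ∈ supported R (V i))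
    (w : κ → R) (x : σ → R) :
    (∀ v, eval x (pderiv v (∑ i ∈ s, C (w i) * A i)) = 0) ↔
      ∀ i ∈ s, w i = 0 ∨ ∀ v, eval x (pderiv v (A i)) = 0 := by
  simp only [map_sum, pderiv_C_mul, eval_mul, eval_C]
  refine ⟨fun h i hi => or_iff_not_imp_left.2 fun hwi v => ?_, fun h v => ?_⟩
  · by_cases hv : v ∈ V i
    · have hcollapse : ∑ j ∈ s, w j * eval x (pderiv v (A j)) = w i * eval x (pderiv v (A i)) := by
        refine sum_eq_single_of_mem i hi fun j hj hji => ?_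
        have hvj : v ∉ V j := fun hvj => Set.disjoint_left.1 (hdisj hj hi hji) hvj hv
        rw [pderiv_eq_zero_of_mem_supported (hA j hj) hvj, map_zero, mul_zero]
      exact (mul_eq_zero.1 ((hcollapse.symm.trans (h v)))).resolve_left hwi
    · rw [pderiv_eq_zero_of_mem_supported (hA i hi) hv, map_zero]
  · refine sum_eq_zero fun i hi => ?_
    rcases h i hi with hwi | hEi
    · rw [hwi, zero_mul]
    · rw [hEi v, mul_zero]

theorem sum_range_succ_eq_add_add_sum_Icc {M : Type*} [AddCommMonoid M] {m : ℕ} (hm : 1 ≤ m)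
    (f : ℕ → M) : ∑ i ∈ range (m + 1), f i = f 0 + f 1 + ∑ i ∈ Icc 2 m, f i := by
  rw [range_eq_Ico, sum_eq_sum_Ico_succ_bot (by omega), sum_eq_sum_Ico_succ_bot (by omega),
    Ico_add_one_right_eq_Icc, zero_add, add_assoc]

section Trinomial

variable {k : Type*} [Field k] {m : ℕ} {z : ℕ → k}

/-- The image of `A i` in the span of `A 0, A 1` modulo the relations `A ℓ = -z ℓ • A 0 - A 1`
(`2 ≤ ℓ`), written in the basis `A 0, A 1`. -/
def trinomialColumn (z : ℕ → k) : ℕ → k × k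
  | 0 => (1, 0)
  | 1 => (0, 1)
  | ℓ + 2 => (-z (ℓ + 2), -1)

/-- The coefficient of `A i` in `∑ ℓ ∈ Icc 2 m, c ℓ • (z ℓ • A 0 + A 1 + A ℓ)`, for `i ≤ m`. -/
def trinomialCoeff (m : ℕ) (z c : ℕ → k) : ℕ → k
  | 0 => ∑ ℓ ∈ Icc 2 m, c ℓ * z ℓ
  | 1 => ∑ ℓ ∈ Icc 2 m, c ℓ
  | ℓ + 2 => c (ℓ + 2)

@[simp]
theorem trinomialCoeff_zero (c : ℕ → k) : trinomialCoeff m z c 0 = ∑ ℓ ∈ Icc 2 m, c ℓ * z ℓ :=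
  rfl

@[simp]
theorem trinomialCoeff_one (c : ℕ → k) : trinomialCoeff m z c 1 = ∑ ℓ ∈ Icc 2 m, c ℓ :=
  rfl

theorem trinomialColumn_of_two_le {ℓ : ℕ} (hℓ : 2 ≤ ℓ) : trinomialColumn z ℓ = (-z ℓ, -1) := by
  obtain ⟨n, rfl⟩ := Nat.exists_eq_add_of_le' hℓ
  rfl

theorem trinomialCoeff_of_two_le (c : ℕ → k) {ℓ : ℕ} (hℓ : 2 ≤ ℓ) :
    trinomialCoeff m z c ℓ = c ℓ := by
  obtain ⟨n, rfl⟩ := Nat.exists_eq_add_of_le' hℓ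
  rfl

theorem sum_C_mul_trinomial {σ : Type*} (hm : 1 ≤ m) (A : ℕ → MvPolynomial σ k) (c : ℕ → k) :
    ∑ ℓ ∈ Icc 2 m, C (c ℓ) * (C (z ℓ) * A 0 + A 1 + A ℓ) =
      ∑ i ∈ range (m + 1), C (trinomialCoeff m z c i) * A i := by
  have htail : ∑ ℓ ∈ Icc 2 m, C (trinomialCoeff m z c ℓ) * A ℓ = ∑ ℓ ∈ Icc 2 m, C (c ℓ) * A ℓ :=
    sum_congr rfl fun ℓ hℓ => by rw [trinomialCoeff_of_two_le c (mem_Icc.1 hℓ).1]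
  rw [sum_range_succ_eq_add_add_sum_Icc hm, trinomialCoeff_zero, trinomialCoeff_one, htail]
  simp only [mul_add, sum_add_distrib, map_sum, map_mul, sum_mul, mul_assoc]

theorem sum_smul_trinomialColumn (hm : 1 ≤ m) (w : ℕ → k) :
    ∑ i ∈ range (m + 1), w i • trinomialColumn z i =
      (w 0 - ∑ ℓ ∈ Icc 2 m, w ℓ * z ℓ, w 1 - ∑ ℓ ∈ Icc 2 m, w ℓ) := by
  rw [sum_range_succ_eq_add_add_sum_Icc hm,
    sum_congr rfl fun ℓ hℓ => by rw [trinomialColumn_of_two_le (mem_Icc.1 hℓ).1]]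
  ext <;> simp [trinomialColumn, Prod.fst_sum, Prod.snd_sum, sub_eq_add_neg]

theorem sum_smul_trinomialColumn_trinomialCoeff (hm : 1 ≤ m) (c : ℕ → k) :
    ∑ i ∈ range (m + 1), trinomialCoeff m z c i • trinomialColumn z i = 0 := by
  have htail : ∑ ℓ ∈ Icc 2 m, trinomialCoeff m z c ℓ * z ℓ = ∑ ℓ ∈ Icc 2 m, c ℓ * z ℓ :=
    sum_congr rfl fun ℓ hℓ => by rw [trinomialCoeff_of_two_le c (mem_Icc.1 hℓ).1]
  have htail' : ∑ ℓ ∈ Icc 2 m, trinomialCoeff m z c ℓ = ∑ ℓ ∈ Icc 2 m, c ℓ :=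
    sum_congr rfl fun ℓ hℓ => trinomialCoeff_of_two_le c (mem_Icc.1 hℓ).1
  rw [sum_smul_trinomialColumn hm, trinomialCoeff_zero, trinomialCoeff_one, htail, htail',
    sub_self, sub_self, Prod.mk_zero_zero]

theorem trinomialCoeff_eq_self (hm : 1 ≤ m) {w : ℕ → k}
    (hw : ∑ i ∈ range (m + 1), w i • trinomialColumn z i = 0) : trinomialCoeff m z w = w := by
  rw [sum_smul_trinomialColumn hm, Prod.mk_eq_zero, sub_eq_zero, sub_eq_zero] at hw
  funext i
  match i with
  | 0 => exact hw.1.symm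
  | 1 => exact hw.2.symm
  | ℓ + 2 => rfl

theorem trinomialColumn_ne_zero (i : ℕ) : trinomialColumn z i ≠ 0 := by
  rcases i with _ | _ | ℓ <;> simp [trinomialColumn]

theorem linearIndepOn_trinomialColumn_pair (hz0 : ∀ ℓ ∈ Icc 2 m, z ℓ ≠ 0)
    (hzd : Set.InjOn z (Icc 2 m : Finset ℕ)) {i j : ℕ} (hi : i ≤ m) (hj : j ≤ m) (hij : i ≠ j) :
    LinearIndepOn k (trinomialColumn z) {i, j} := by
  wlog hlt : i < j generalizing i j
  · rw [Set.pair_comm]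
    exact this hj hi hij.symm (by omega)
  rw [LinearIndepOn.pair_iff _ hij]
  intro a b hab
  simp only [Prod.ext_iff, Prod.fst_add, Prod.snd_add, Prod.smul_fst, Prod.smul_snd, smul_eq_mul,
    Prod.fst_zero, Prod.snd_zero] at hab
  match i, j, hlt with
  | 0, 1, _ => simpa [trinomialColumn] using hab
  | 0, ℓ + 2, _ =>
    simp only [trinomialColumn, mul_one, mul_zero, mul_neg, zero_add, neg_eq_zero] at hab
    obtain ⟨ha, rfl⟩ := hab
    simpa using ha
  | 1, ℓ + 2, _ =>
    simp only [trinomialColumn, mul_one, mul_zero, mul_neg, zero_add, neg_eq_zero] at hab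
    have hb : b = 0 := (mul_eq_zero.1 hab.1).resolve_right (hz0 _ (mem_Icc.2 ⟨by omega, hj⟩))
    subst hb
    simpa using hab.2
  | i + 2, ℓ + 2, _ =>
    simp only [trinomialColumn, mul_neg, mul_one] at hab
    have hz : z (ℓ + 2) - z (i + 2) ≠ 0 := sub_ne_zero.2 fun h =>
      hij (hzd (by simp; omega) (by simp; omega) h).symm
    have ha : a * (z (ℓ + 2) - z (i + 2)) = 0 := by linear_combination hab.1 - z (ℓ + 2) * hab.2
    have ha0 : a = 0 := (mul_eq_zero.1 ha).resolve_right hz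
    subst ha0
    simpa using hab.2

open Classical in
theorem exists_trinomialCoeff_support_subset_iff (hm : 1 ≤ m) (hz0 : ∀ ℓ ∈ Icc 2 m, z ℓ ≠ 0)
    (hzd : Set.InjOn z (Icc 2 m : Finset ℕ)) (P : ℕ → Prop) :
    (∃ c : ℕ → k, (∃ ℓ ∈ Icc 2 m, c ℓ ≠ 0) ∧
        ∀ i ∈ range (m + 1), trinomialCoeff m z c i = 0 ∨ P i) ↔
      3 ≤ #((range (m + 1)).filter P) := by
  have hpair : ∀ i ∈ range (m + 1), ∀ j ∈ range (m + 1), i ≠ j →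
      LinearIndepOn k (trinomialColumn z) {i, j} := fun i hi j hj =>
    linearIndepOn_trinomialColumn_pair hz0 hzd (Nat.lt_succ_iff.1 (mem_range.1 hi))
      (Nat.lt_succ_iff.1 (mem_range.1 hj))
  constructor
  · rintro ⟨c, ⟨ℓ₀, hℓ₀, hc₀⟩, hP⟩
    have hℓ₀' := mem_Icc.1 hℓ₀
    calc 3 ≤ #((range (m + 1)).filter (trinomialCoeff m z c · ≠ 0)) :=
          three_le_card_filter_ne_zero_of_sum_smul_eq_zero (fun i _ => trinomialColumn_ne_zero i)
            hpair (sum_smul_trinomialColumn_trinomialCoeff hm c)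
            (mem_range.2 (by omega : ℓ₀ < m + 1))
            (by rwa [trinomialCoeff_of_two_le c hℓ₀'.1])
      _ ≤ #((range (m + 1)).filter P) := by
          refine card_le_card fun i hi => ?_
          obtain ⟨hi, hci⟩ := mem_filter.1 hi
          exact mem_filter.2 ⟨hi, (hP i hi).resolve_left hci⟩
  · intro h3
    obtain ⟨w, hw, ⟨i, hi, hwi⟩, hwP⟩ := exists_sum_smul_eq_zero_of_finrank_lt_card
      (filter_subset P (range (m + 1))) (trinomialColumn z)
      (by rw [finrank_prod (R := k), finrank_self]; omega)
    have hcoeff := trinomialCoeff_eq_self hm hw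
    refine ⟨w, ?_, fun j _ => ?_⟩
    · by_contra! hzero
      have hsum : ∑ ℓ ∈ Icc 2 m, w ℓ = 0 := sum_eq_zero hzero
      have hsumz : ∑ ℓ ∈ Icc 2 m, w ℓ * z ℓ = 0 := sum_eq_zero fun ℓ hℓ => by
        rw [hzero ℓ hℓ, zero_mul]
      rw [← hcoeff] at hwi
      match i with
      | 0 => exact hwi hsumz
      | 1 => exact hwi hsum
      | ℓ + 2 => exact hwi (hzero (ℓ + 2) (mem_Icc.2 ⟨by omega, by simpa using hi⟩))
    · rw [hcoeff]
      exact or_iff_not_imp_left.2 fun hwj => (mem_filter.1 (hwP j hwj)).2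

end Trinomial

open MvPolynomial Finset in
theorem stmt13_general {k : Type*} [Field k] {ι : Type*}
    (m : ℕ) (hm : 2 ≤ m)
    (A : ℕ → MvPolynomial ι k) (V : ℕ → Set ι)
    (hdisj : ∀ i j, i ≤ m → j ≤ m → i ≠ j → Disjoint (V i) (V j))
    (hsupp : ∀ i, i ≤ m → A i ∈ MvPolynomial.supported k (V i))
    (z : ℕ → k) (hz0 : ∀ ℓ ∈ Icc 2 m, z ℓ ≠ 0)
    (hzd : Set.InjOn z (Icc 2 m : Finset ℕ))
    (L : ℕ → MvPolynomial ι k)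
    (hL : ∀ ℓ, L ℓ = C (z ℓ) * A 0 + A 1 + A ℓ)
    (x : ι → k) :
    (∃ c : ℕ → k, (∃ ℓ ∈ Icc 2 m, c ℓ ≠ 0) ∧
        ∀ v : ι, eval x (pderiv v (∑ ℓ ∈ Icc 2 m, C (c ℓ) * L ℓ)) = 0) ↔
      3 ≤ Nat.card {i : ℕ // i ≤ m ∧ ∀ v : ι, eval x (pderiv v (A i)) = 0} := by
  classical
  have hm1 : 1 ≤ m := by omega
  have hle : ∀ {i}, i ∈ range (m + 1) → i ≤ m := fun hi => Nat.lt_succ_iff.1 (mem_range.1 hi)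
  have hcard : Nat.card {i : ℕ // i ≤ m ∧ ∀ v : ι, eval x (pderiv v (A i)) = 0} =
      #((range (m + 1)).filter fun i => ∀ v : ι, eval x (pderiv v (A i)) = 0) := by
    rw [← Nat.card_eq_finsetCard]
    exact Nat.card_congr (Equiv.subtypeEquivRight fun i => by simp)
  rw [hcard, ← exists_trinomialCoeff_support_subset_iff hm1 hz0 hzd]
  refine exists_congr fun c => and_congr_right fun _ => ?_
  simp only [hL, sum_C_mul_trinomial hm1 A c]
  exact forall_eval_pderiv_sum_C_mul_eq_zero_iff
    (fun i hi j hj hij => hdisj i j (hle hi) (hle hj) hij) (fun i hi => hsupp i (hle hi)) _ x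

open MvPolynomial Finset in
/-- Smoothness criterion for trinomial varieties: with `L_ℓ = z_ℓ·A₀ + A₁ + A_ℓ`
(`2 ≤ ℓ ≤ m`) where the `A_i` are monomials in pairwise disjoint sets of
variables and the `z_ℓ ∈ k*` are pairwise distinct, a point `x` of
`V(L₂,…,L_m)` is singular (some nontrivial linear combination of the `L_ℓ` has
all partial derivatives vanishing at `x`) if and only if there are at least
three indices `i ∈ {0,…,m}` such that all partial derivatives of `A_i` vanish
at `x`. -/
theorem stmt13 {k : Type*} [Field k] {ι : Type*} [DecidableEq ι]
    (m : ℕ) (hm : 2 ≤ m)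
    (A : ℕ → MvPolynomial ι k) (V : ℕ → Set ι)
    (hdisj : ∀ i j, i ≤ m → j ≤ m → i ≠ j → Disjoint (V i) (V j))
    (hsupp : ∀ i, i ≤ m → A i ∈ MvPolynomial.supported k (V i))
    (hmono : ∀ i, i ≤ m → ∃ dd : ι →₀ ℕ, A i = monomial dd (1 : k))
    (z : ℕ → k) (hz0 : ∀ ℓ ∈ Icc 2 m, z ℓ ≠ 0)
    (hzd : Set.InjOn z (Icc 2 m : Finset ℕ))
    (L : ℕ → MvPolynomial ι k)
    (hL : ∀ ℓ, L ℓ = C (z ℓ) * A 0 + A 1 + A ℓ)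
    (x : ι → k) (hx : ∀ ℓ ∈ Icc 2 m, eval x (L ℓ) = 0) :
    (∃ c : ℕ → k, (∃ ℓ ∈ Icc 2 m, c ℓ ≠ 0) ∧
        ∀ v : ι, eval x (pderiv v (∑ ℓ ∈ Icc 2 m, C (c ℓ) * L ℓ)) = 0) ↔
      3 ≤ Nat.card {i : ℕ // i ≤ m ∧ ∀ v : ι, eval x (pderiv v (A i)) = 0} :=
  stmt13_general m hm A V hdisj hsupp z hz0 hzd L hL x
end

section
/- Let z₂,…,z_m ∈ k* be pairwise distinct nonzero elements of a field k. Then every nonzero vector in the k-span of the vectors v_ℓ = z_ℓ·e₀ + e₁ + e_ℓ ∈ k^{m+1} (for 2 ≤ ℓ ≤ m, with e₀,…,e_m the standard basis) has at least three nonzero coordinates. -/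
/-!
The coordinates of `∑ c_ℓ v_ℓ` are `∑ c_ℓ z_ℓ`, `∑ c_ℓ` and the `c_ℓ` themselves. If exactly one
`c_a` is nonzero, the first two coordinates are `c_a z_a` and `c_a`, both nonzero since `z_a ≠ 0`.
If exactly two, `c_a` and `c_b`, are nonzero and `c_a + c_b = 0`, then the first coordinate is
`c_a (z_a - z_b) ≠ 0`.
-/

open Finset

theorem mul_add_mul_ne_zero_or_add_ne_zero {k : Type*} [Field k] {a b x y : k}
    (ha : a ≠ 0) (hxy : x ≠ y) : a * x + b * y ≠ 0 ∨ a + b ≠ 0 := by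
  by_contra! h
  have hb : b = -a := eq_neg_of_add_eq_zero_right h.2
  have : a * (x - y) = 0 := by rw [← h.1, hb]; ring
  exact hxy (sub_eq_zero.mp ((mul_eq_zero.mp this).resolve_left ha))

open scoped Classical in
theorem three_le_ite_add_ite_add_card_filter {ι k : Type*} [Field k] {s : Finset ι}
    {z c : ι → k} (hz0 : ∀ i ∈ s, z i ≠ 0) (hz : Set.InjOn z s) (hc : ∃ i ∈ s, c i ≠ 0) :
    3 ≤ (if ∑ i ∈ s, c i * z i ≠ 0 then 1 else 0) + (if ∑ i ∈ s, c i ≠ 0 then 1 else 0)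
      + #{i ∈ s | c i ≠ 0} := by
  set S := s.filter (c · ≠ 0)
  have hsum_mul : ∑ i ∈ s, c i * z i = ∑ i ∈ S, c i * z i :=
    (sum_filter_of_ne fun i _ h => left_ne_zero_of_mul h).symm
  have hsum : ∑ i ∈ s, c i = ∑ i ∈ S, c i := (sum_filter_of_ne fun _ _ h => h).symm
  have hmem : ∀ {i}, i ∈ S → i ∈ s ∧ c i ≠ 0 := mem_filter.mp
  rw [hsum_mul, hsum]
  obtain hS0 | hS1 | hS2 | _ : #S = 0 ∨ #S = 1 ∨ #S = 2 ∨ 3 ≤ #S := by omega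
  · obtain ⟨i, hi, hci⟩ := hc
    exact absurd hS0 (card_ne_zero_of_mem (mem_filter.mpr ⟨hi, hci⟩))
  · obtain ⟨a, ha⟩ := card_eq_one.mp hS1
    obtain ⟨has, hca⟩ := hmem (ha ▸ mem_singleton_self a)
    simp [ha, hca, hz0 a has]
  · obtain ⟨a, b, hab, hSab⟩ := card_eq_two.mp hS2
    obtain ⟨has, hca⟩ := hmem (hSab ▸ mem_insert_self a {b})
    have hbs := (hmem (hSab ▸ mem_insert_of_mem (mem_singleton_self b))).1
    rw [hSab, card_pair hab]
    rcases mul_add_mul_ne_zero_or_add_ne_zero (b := c b) hca (hz.ne has hbs hab) with h | h <;>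
      simp [h, sum_pair hab]
  · omega

section

variable {k : Type*} [Field k] (z c : ℕ → k) (s : Finset ℕ)

def trinomialVector (ℓ : ℕ) : ℕ → k :=
  z ℓ • Pi.single 0 1 + Pi.single 1 1 + Pi.single ℓ 1

theorem sum_smul_trinomialVector_apply_zero (hs : ∀ ℓ ∈ s, 2 ≤ ℓ) :
    (∑ ℓ ∈ s, c ℓ • trinomialVector z ℓ) 0 = ∑ ℓ ∈ s, c ℓ * z ℓ := by
  rw [Finset.sum_apply]
  refine sum_congr rfl fun ℓ hℓ => ?_
  have := hs ℓ hℓ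
  simp [trinomialVector, show (0 : ℕ) ≠ ℓ by omega]

theorem sum_smul_trinomialVector_apply_one (hs : ∀ ℓ ∈ s, 2 ≤ ℓ) :
    (∑ ℓ ∈ s, c ℓ • trinomialVector z ℓ) 1 = ∑ ℓ ∈ s, c ℓ := by
  rw [Finset.sum_apply]
  refine sum_congr rfl fun ℓ hℓ => ?_
  have := hs ℓ hℓ
  simp [trinomialVector, show (1 : ℕ) ≠ ℓ by omega]

theorem sum_smul_trinomialVector_apply_of_two_le {j : ℕ} (hj : 2 ≤ j) :
    (∑ ℓ ∈ s, c ℓ • trinomialVector z ℓ) j = if j ∈ s then c j else 0 := by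
  rw [Finset.sum_apply]
  simp [trinomialVector, Pi.single_apply, show j ≠ 0 by omega, show j ≠ 1 by omega]

end

/-- Let `z₂, …, z_m` be pairwise distinct nonzero elements of a field `k`. Every
nonzero vector in the `k`-span of the vectors `v_ℓ = z_ℓ·e₀ + e₁ + e_ℓ`
(`2 ≤ ℓ ≤ m`) has at least three nonzero coordinates. -/
theorem stmt14 {k : Type*} [Field k] (m : ℕ) (hm : 2 ≤ m) (z : ℕ → k)
    (hz0 : ∀ ℓ ∈ Finset.Icc 2 m, z ℓ ≠ 0)
    (hzd : Set.InjOn z (Finset.Icc 2 m : Finset ℕ))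
    (c : ℕ → k) (w : ℕ → k)
    (hw : w = ∑ ℓ ∈ Finset.Icc 2 m,
      c ℓ • (z ℓ • (Pi.single 0 1 : ℕ → k) + (Pi.single 1 1 : ℕ → k)
        + (Pi.single ℓ 1 : ℕ → k)))
    (hne : w ≠ 0) :
    3 ≤ Nat.card {i : ℕ // i ≤ m ∧ w i ≠ 0} := by
  classical
  replace hw : w = ∑ ℓ ∈ Icc 2 m, c ℓ • trinomialVector z ℓ := hw
  have hs : ∀ ℓ ∈ Icc 2 m, 2 ≤ ℓ := fun ℓ hℓ => (mem_Icc.mp hℓ).1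
  have hc : ∃ ℓ ∈ Icc 2 m, c ℓ ≠ 0 := by
    by_contra! h
    exact hne (hw.trans (sum_eq_zero fun ℓ hℓ => by simp [h ℓ hℓ]))
  have hw0 : w 0 = ∑ ℓ ∈ Icc 2 m, c ℓ * z ℓ := by
    rw [hw, sum_smul_trinomialVector_apply_zero _ _ _ hs]
  have hw1 : w 1 = ∑ ℓ ∈ Icc 2 m, c ℓ := by
    rw [hw, sum_smul_trinomialVector_apply_one _ _ _ hs]
  have hwc : ∀ j ∈ Icc 2 m, c j ≠ 0 ↔ w j ≠ 0 := fun j hj => by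
    rw [hw, sum_smul_trinomialVector_apply_of_two_le _ _ _ (hs j hj), if_pos hj]
  calc 3 ≤ (if w 0 ≠ 0 then 1 else 0) + (if w 1 ≠ 0 then 1 else 0) + #{j ∈ Icc 2 m | w j ≠ 0} := by
        rw [hw0, hw1, ← filter_congr hwc]
        exact three_le_ite_add_ite_add_card_filter hz0 hzd hc
    _ = #{i ∈ {0, 1} ∪ Icc 2 m | w i ≠ 0} := by
      rw [filter_union, card_union_of_disjoint (disjoint_filter_filter (by simp [disjoint_left])),
        card_filter _ {0, 1}, sum_pair zero_ne_one]
    _ ≤ Nat.card {i : ℕ // i ≤ m ∧ w i ≠ 0} := by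
      rw [← Nat.card_eq_finsetCard]
      refine Nat.card_mono ((Set.finite_Iic m).subset fun i hi => hi.1) fun i hi => ?_
      obtain ⟨hi, hwi⟩ := mem_filter.mp hi
      refine ⟨?_, hwi⟩
      simp only [mem_union, mem_insert, mem_singleton, mem_Icc] at hi
      omega
end
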